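/- arXiv:math/9807122 — 3 statements merged into one kernel-verified Lean document; each statement's English description precedes it below -/
import Mathlib

section
/- In sl(3) (3×3 traceless matrices with matrix units E_{ij} and H_{13} = E_{11} - E_{33}), the element r_j = H_{13} ∧ E_{13} + 2 E_{12} ∧ E_{23} satisfies the classical Yang–Baxter equation [r_{12}, r_{13}] + [r_{12}, r_{23}] + [r_{13}, r_{23}] = 0. -/
/-!
If `r = ∑ xᵢ ⊗ yᵢ`, each of the three brackets `⁅r₁₂, r₁₃⁆, ⁅r₁₂, r₂₃⁆, ⁅r₁₃, r₂₃⁆` is a sum of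
pure tensors carrying exactly one commutator `⁅xᵢ, xⱼ⁆`, `⁅yᵢ, xⱼ⁆` or `⁅yᵢ, yⱼ⁆`. So the CYBE for
`r = h ∧ e + 2 a ∧ b` only sees the brackets among `h = H₁₃`, `e = E₁₃`, `a = E₁₂`, `b = E₂₃`, and these
close up: `⁅h, e⁆ = 2e`, `⁅h, a⁆ = a`, `⁅h, b⁆ = b`, `⁅a, b⁆ = e`, `⁅e, a⁆ = ⁅e, b⁆ = 0`. Substituting
them, the 48 resulting terms cancel. The relations are preserved by the Lie map
`gl(3) → U(gl(3))`, so the computation can be done in an arbitrary associative algebra.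
-/

open scoped TensorProduct

noncomputable section

attribute [local instance 100] LieRing.ofAssociativeRing

abbrev gl3 := Matrix (Fin 3) (Fin 3) ℚ
abbrev U3 := UniversalEnvelopingAlgebra ℚ gl3

noncomputable def ι3 : gl3 → U3 := fun a => UniversalEnvelopingAlgebra.ι ℚ a

noncomputable def p12 : U3 ⊗[ℚ] U3 →ₐ[ℚ] (U3 ⊗[ℚ] U3) ⊗[ℚ] U3 :=
  Algebra.TensorProduct.includeLeft

noncomputable def p13 : U3 ⊗[ℚ] U3 →ₐ[ℚ] (U3 ⊗[ℚ] U3) ⊗[ℚ] U3 :=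
  Algebra.TensorProduct.map Algebra.TensorProduct.includeLeft (AlgHom.id ℚ U3)

noncomputable def p23 : U3 ⊗[ℚ] U3 →ₐ[ℚ] (U3 ⊗[ℚ] U3) ⊗[ℚ] U3 :=
  Algebra.TensorProduct.map Algebra.TensorProduct.includeRight (AlgHom.id ℚ U3)

/-- a ∧ b = a ⊗ b - b ⊗ a in U(sl(3)) ⊗ U(sl(3)) -/
noncomputable def wedge (a b : gl3) : U3 ⊗[ℚ] U3 :=
  ι3 a ⊗ₜ[ℚ] ι3 b - ι3 b ⊗ₜ[ℚ] ι3 a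

structure IsExtendedJordanian {L : Type*} [LieRing L] (h e a b : L) : Prop where
  lie_h_e : ⁅h, e⁆ = 2 • e
  lie_h_a : ⁅h, a⁆ = a
  lie_h_b : ⁅h, b⁆ = b
  lie_a_b : ⁅a, b⁆ = e
  lie_e_a : ⁅e, a⁆ = 0
  lie_e_b : ⁅e, b⁆ = 0

theorem IsExtendedJordanian.map {R L L' : Type*} [CommRing R] [LieRing L] [LieAlgebra R L]
    [LieRing L'] [LieAlgebra R L'] {h e a b : L} (hj : IsExtendedJordanian h e a b)
    (f : L →ₗ⁅R⁆ L') : IsExtendedJordanian (f h) (f e) (f a) (f b) where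
  lie_h_e := by rw [← f.map_lie, hj.lie_h_e, map_nsmul]
  lie_h_a := by rw [← f.map_lie, hj.lie_h_a]
  lie_h_b := by rw [← f.map_lie, hj.lie_h_b]
  lie_a_b := by rw [← f.map_lie, hj.lie_a_b]
  lie_e_a := by rw [← f.map_lie, hj.lie_e_a, map_zero]
  lie_e_b := by rw [← f.map_lie, hj.lie_e_b, map_zero]

namespace YangBaxter

variable (R A : Type*) [CommRing R] [Ring A] [Algebra R A]

def leg12 : A ⊗[R] A →ₐ[R] (A ⊗[R] A) ⊗[R] A := Algebra.TensorProduct.includeLeft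

def leg13 : A ⊗[R] A →ₐ[R] (A ⊗[R] A) ⊗[R] A :=
  Algebra.TensorProduct.map Algebra.TensorProduct.includeLeft (AlgHom.id R A)

def leg23 : A ⊗[R] A →ₐ[R] (A ⊗[R] A) ⊗[R] A :=
  Algebra.TensorProduct.map Algebra.TensorProduct.includeRight (AlgHom.id R A)

variable {R A}

def cybe (r : A ⊗[R] A) : (A ⊗[R] A) ⊗[R] A :=
  ⁅leg12 R A r, leg13 R A r⁆ + ⁅leg12 R A r, leg23 R A r⁆ + ⁅leg13 R A r, leg23 R A r⁆

open Algebra.TensorProduct TensorProduct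

theorem lie_leg12_leg13_tmul (x y z w : A) :
    ⁅leg12 R A (x ⊗ₜ y), leg13 R A (z ⊗ₜ w)⁆ = (⁅x, z⁆ ⊗ₜ y) ⊗ₜ w := by
  simp [leg12, leg13, Ring.lie_def, tmul_mul_tmul, sub_tmul]

theorem lie_leg12_leg23_tmul (x y z w : A) :
    ⁅leg12 R A (x ⊗ₜ y), leg23 R A (z ⊗ₜ w)⁆ = (x ⊗ₜ ⁅y, z⁆) ⊗ₜ w := by
  simp [leg12, leg23, Ring.lie_def, tmul_mul_tmul, sub_tmul, tmul_sub]

theorem lie_leg13_leg23_tmul (x y z w : A) :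
    ⁅leg13 R A (x ⊗ₜ y), leg23 R A (z ⊗ₜ w)⁆ = (x ⊗ₜ z) ⊗ₜ ⁅y, w⁆ := by
  simp [leg13, leg23, Ring.lie_def, tmul_mul_tmul, tmul_sub]

end YangBaxter

open YangBaxter TensorProduct in
theorem IsExtendedJordanian.cybe_eq_zero {R A : Type*} [CommRing R] [Ring A] [Algebra R A]
    {h e a b : A} (hj : IsExtendedJordanian h e a b) :
    cybe (h ⊗ₜ[R] e - e ⊗ₜ h + (2 : R) • (a ⊗ₜ b - b ⊗ₜ a)) = 0 := by
  obtain ⟨he, ha, hb, hab, hea, heb⟩ := hj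
  have eh : ⁅e, h⁆ = -(2 • e) := by rw [← lie_skew, he]
  have ah : ⁅a, h⁆ = -a := by rw [← lie_skew, ha]
  have bh : ⁅b, h⁆ = -b := by rw [← lie_skew, hb]
  have ba : ⁅b, a⁆ = -e := by rw [← lie_skew, hab]
  have ae : ⁅a, e⁆ = 0 := by rw [← lie_skew, hea, neg_zero]
  have be : ⁅b, e⁆ = 0 := by rw [← lie_skew, heb, neg_zero]
  simp only [cybe, map_add, map_sub, two_smul, lie_add, add_lie, lie_sub, sub_lie,
    lie_leg12_leg13_tmul, lie_leg12_leg23_tmul, lie_leg13_leg23_tmul, lie_self,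
    he, ha, hb, hab, hea, heb, eh, ah, bh, ba, ae, be]
  simp only [tmul_neg, neg_tmul, tmul_add, add_tmul, tmul_zero, zero_tmul]
  abel

theorem isExtendedJordanian_gl3 :
    IsExtendedJordanian (Matrix.single 0 0 1 - Matrix.single 2 2 1 : gl3) (Matrix.single 0 2 1)
      (Matrix.single 0 1 1) (Matrix.single 1 2 1) where
  lie_h_e := by simp [Ring.lie_def, sub_mul, mul_sub, ← Matrix.single_add, one_add_one_eq_two]
  lie_h_a := by simp [Ring.lie_def, sub_mul, mul_sub]
  lie_h_b := by simp [Ring.lie_def, sub_mul, mul_sub]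
  lie_a_b := by simp [Ring.lie_def]
  lie_e_a := by simp [Ring.lie_def]
  lie_e_b := by simp [Ring.lie_def]

theorem sl3_jordanian_r_matrix_CYBE :
    let E : Fin 3 → Fin 3 → gl3 := fun i j => Matrix.single i j 1
    let H13 : gl3 := E 0 0 - E 2 2
    let r : U3 ⊗[ℚ] U3 := wedge H13 (E 0 2) + (2 : ℚ) • wedge (E 0 1) (E 1 2)
    ⁅p12 r, p13 r⁆ + ⁅p12 r, p23 r⁆ + ⁅p13 r, p23 r⁆ = 0 :=
  (isExtendedJordanian_gl3.map (UniversalEnvelopingAlgebra.ι ℚ)).cybe_eq_zero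
end
end

section
/- With the notation of the osp(1|2)* example, the map μ₂* is a 2-cocycle of the Lie superalgebra (g*, μ₁*) with values in the adjoint module, i.e. the graded cocycle condition Σ_{cyclic} (-1)^{ε} ( μ₁*(a, μ₂*(b,c)) - μ₂*(a, μ₁*(b,c)) ) = 0 holds for all triples of basis elements; consequently μ₁* + ξ μ₂* satisfies the graded Jacobi identity to first order in ξ. -/
/- STATEMENT 8: with the osp(1|2)* data (even basis ĥ, X̂₊, X̂₋ = indices 0,1,2;
odd basis v̂₊, v̂₋ = indices 3,4), the map μ₂* is a 2-cocycle of (g*, μ₁*) with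
values in the adjoint module: the first-order (in ξ) term of the graded Jacobi
identity for μ₁* + ξ μ₂*, namely the graded cyclic sum
(-1)^{|a||c|} ( μ₁*(a, μ₂*(b,c)) + μ₂*(a, μ₁*(b,c)) ) + cyclic = 0,
holds on all triples of basis elements; consequently μ₁* + ξ μ₂* satisfies the
graded Jacobi identity to first order in ξ. -/

noncomputable section

abbrev V := Fin 5 → ℚ

noncomputable def e (i : Fin 5) : V := Pi.single i 1

/-- parity: 0 for the even basis elements, 1 for the odd ones -/
def par (i : Fin 5) : ℕ := if (i : ℕ) < 3 then 0 else 1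

/-- (-1)^{|i||j|} -/
noncomputable def sgn (i j : Fin 5) : ℚ := (-1 : ℚ) ^ (par i * par j)

noncomputable def mu1 : Fin 5 → Fin 5 → V :=
  ![![0, (-2 : ℚ) • e 1, (-2 : ℚ) • e 2, -(e 3), -(e 4)],
    ![(2 : ℚ) • e 1, 0, 0, 0, 0],
    ![(2 : ℚ) • e 2, 0, 0, 0, 0],
    ![e 3, 0, 0, (4 : ℚ) • e 1, 0],
    ![e 4, 0, 0, 0, (4 : ℚ) • e 2]]

noncomputable def mu2 : Fin 5 → Fin 5 → V :=
  ![![0, (-2 : ℚ) • e 0, 0, 0, 0],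
    ![(2 : ℚ) • e 0, 0, (2 : ℚ) • e 2, e 3, e 4],
    ![0, (-2 : ℚ) • e 2, 0, 0, 0],
    ![0, -(e 3), 0, (4 : ℚ) • e 0, (4 : ℚ) • e 2],
    ![0, -(e 4), 0, (4 : ℚ) • e 2, 0]]

/-- bilinear extension of a table of structure constants -/
noncomputable def br (μ : Fin 5 → Fin 5 → V) (u v : V) : V :=
  ∑ i : Fin 5, ∑ j : Fin 5, (u i * v j) • μ i j


-- auxiliary integer structure constants and lemmas
def vz (c : ℤ) (k : Fin 5) : Fin 5 → ℤ := fun m => if m = k then c else 0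

def c1 : Fin 5 → Fin 5 → Fin 5 → ℤ :=
  ![![0, vz (-2) 1, vz (-2) 2, vz (-1) 3, vz (-1) 4],
    ![vz 2 1, 0, 0, 0, 0],
    ![vz 2 2, 0, 0, 0, 0],
    ![vz 1 3, 0, 0, vz 4 1, 0],
    ![vz 1 4, 0, 0, 0, vz 4 2]]

def c2 : Fin 5 → Fin 5 → Fin 5 → ℤ :=
  ![![0, vz (-2) 0, 0, 0, 0],
    ![vz 2 0, 0, vz 2 2, vz 1 3, vz 1 4],
    ![0, vz (-2) 2, 0, 0, 0],
    ![0, vz (-1) 3, 0, vz 4 0, vz 4 2],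
    ![0, vz (-1) 4, 0, vz 4 2, 0]]

def s (i j : Fin 5) : ℤ := (-1 : ℤ) ^ (par i * par j)

lemma e_apply (i m : Fin 5) : e i m = if m = i then 1 else 0 := by
  simp [e, Pi.single_apply]

lemma mu1_apply : ∀ i j m : Fin 5, mu1 i j m = (c1 i j m : ℚ) := by
  intro i j m
  fin_cases i <;> fin_cases j <;> fin_cases m <;>
    simp (config := { decide := true }) [mu1, c1, vz, e_apply]

lemma mu2_apply : ∀ i j m : Fin 5, mu2 i j m = (c2 i j m : ℚ) := by
  intro i j m
  fin_cases i <;> fin_cases j <;> fin_cases m <;>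
    simp (config := { decide := true }) [mu2, c2, vz, e_apply]

lemma sgn_eq (i j : Fin 5) : sgn i j = (s i j : ℚ) := by
  simp [sgn, s]

lemma br_eLeft (μ : Fin 5 → Fin 5 → V) (i : Fin 5) (v : V) :
    br μ (e i) v = ∑ b : Fin 5, v b • μ i b := by
  rw [br, Finset.sum_eq_single i]
  · simp [e_apply, mul_smul]
  · intro a _ ha; simp [e_apply, ha]
  · simp

lemma br_ee (μ : Fin 5 → Fin 5 → V) (i j : Fin 5) : br μ (e i) (e j) = μ i j := by
  rw [br_eLeft, Finset.sum_eq_single j]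
  · simp [e_apply]
  · intro b _ hb; simp [e_apply, hb]
  · simp

lemma br_e_apply (μ : Fin 5 → Fin 5 → V) (i : Fin 5) (v : V) (m : Fin 5) :
    br μ (e i) v m = ∑ b : Fin 5, v b * μ i b m := by
  rw [br_eLeft]
  simp [Finset.sum_apply]

def Sm (f : Fin 5 → ℤ) : ℤ := f 0 + f 1 + f 2 + f 3 + f 4

lemma key : ∀ i j k m : Fin 5,
    s i k * (Sm (fun b => c2 j k b * c1 i b m) + Sm (fun b => c1 j k b * c2 i b m)) +
    s j i * (Sm (fun b => c2 k i b * c1 j b m) + Sm (fun b => c1 k i b * c2 j b m)) +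
    s k j * (Sm (fun b => c2 i j b * c1 k b m) + Sm (fun b => c1 i j b * c2 k b m)) = 0 := by
  decide

theorem mu2_is_two_cocycle_of_mu1 :
    ∀ i j k : Fin 5,
      sgn i k • (br mu1 (e i) (br mu2 (e j) (e k)) + br mu2 (e i) (br mu1 (e j) (e k))) +
      sgn j i • (br mu1 (e j) (br mu2 (e k) (e i)) + br mu2 (e j) (br mu1 (e k) (e i))) +
      sgn k j • (br mu1 (e k) (br mu2 (e i) (e j)) + br mu2 (e k) (br mu1 (e i) (e j))) = 0 := by
  intro i j k
  funext m
  have h := key i j k m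
  simp only [Pi.add_apply, Pi.smul_apply, Pi.zero_apply, smul_eq_mul, br_ee, br_e_apply,
    mu1_apply, mu2_apply, sgn_eq, Fin.sum_univ_five]
  simp only [Sm] at h
  exact_mod_cast congrArg (fun z : ℤ => (z : ℚ)) h
end
end

section
/- In U(sl(2))[[ξ]], with h, x satisfying [h,x] = 2x, let σ = (1/2) log(1 + 2ξx) and F = exp((1/2) h ⊗ log(1 + 2ξx)) = exp(h ⊗ σ). Then F satisfies the 2-cocycle (twist) equation (F ⊗ 1)((Δ ⊗ id)F) = (1 ⊗ F)((id ⊗ Δ)F) modulo ξ³, where Δ is the standard (cocommutative) coproduct Δ(a) = a ⊗ 1 + 1 ⊗ a on generators. -/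
/-! Write `F = 1 + ξ f₁ + ξ² f₂` with `f₁ = h ⊗ x`. Each side of the cocycle equation is a
product of two quadratic polynomials in `ξ`, so the two sides agree modulo `ξ³` once their
coefficients of `ξ` and `ξ²` agree. At order `ξ` this is primitivity of `h` and `x`. At order `ξ²`
all terms cancel except `h ⊗ (x h - h x + 2 x) ⊗ x`, coming from `f₁ ⊗ 1` times `(Δ ⊗ id) f₁`
against `1 ⊗ f₁` times `(id ⊗ Δ) f₁`; it vanishes because `[h, x] = 2 x`. -/

open scoped TensorProduct

noncomputable section

attribute [local instance] LieRing.ofAssociativeRing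

abbrev gl2 := Matrix (Fin 2) (Fin 2) ℚ
abbrev A := UniversalEnvelopingAlgebra ℚ gl2

noncomputable def ι : gl2 → A := fun a => UniversalEnvelopingAlgebra.ι ℚ a

noncomputable def hgen : A := ι (Matrix.single 0 0 1 - Matrix.single 1 1 1)
noncomputable def xgen : A := ι (Matrix.single 0 1 1)

/-- the ξ-expansion of F = exp(h ⊗ (1/2)log(1+2ξx)) through order ξ² -/
noncomputable def F (ξ : ℚ) : A ⊗[ℚ] A :=
  1 + ξ • (hgen ⊗ₜ[ℚ] xgen) +
    ξ ^ 2 • ((1 / 2 : ℚ) • ((hgen * hgen) ⊗ₜ[ℚ] (xgen * xgen)) - hgen ⊗ₜ[ℚ] (xgen * xgen))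

noncomputable def q12 : A ⊗[ℚ] A →ₐ[ℚ] (A ⊗[ℚ] A) ⊗[ℚ] A :=
  Algebra.TensorProduct.includeLeft

noncomputable def q23 : A ⊗[ℚ] A →ₐ[ℚ] (A ⊗[ℚ] A) ⊗[ℚ] A :=
  Algebra.TensorProduct.map Algebra.TensorProduct.includeRight (AlgHom.id ℚ A)

theorem quadratic_mul_quadratic {R T : Type*} [CommRing R] [Ring T] [Algebra R T] (ξ : R)
    (a₁ a₂ b₁ b₂ : T) :
    (1 + ξ • a₁ + ξ ^ 2 • a₂) * (1 + ξ • b₁ + ξ ^ 2 • b₂) =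
      1 + ξ • (a₁ + b₁) + ξ ^ 2 • (a₂ + b₂ + a₁ * b₁) + ξ ^ 3 • (a₁ * b₂ + a₂ * b₁) +
        ξ ^ 4 • (a₂ * b₂) := by
  simp only [mul_add, add_mul, one_mul, mul_one, smul_mul_assoc, mul_smul_comm]
  module

theorem exists_quadratic_mul_sub_eq_sum_Icc_three_four {R T : Type*} [CommRing R] [Ring T]
    [Algebra R T] {a₁ a₂ b₁ b₂ c₁ c₂ d₁ d₂ : T} (h₁ : a₁ + b₁ = c₁ + d₁)
    (h₂ : a₂ + b₂ + a₁ * b₁ = c₂ + d₂ + c₁ * d₁) :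
    ∃ e : ℕ → T, ∀ ξ : R,
      (1 + ξ • a₁ + ξ ^ 2 • a₂) * (1 + ξ • b₁ + ξ ^ 2 • b₂) -
          (1 + ξ • c₁ + ξ ^ 2 • c₂) * (1 + ξ • d₁ + ξ ^ 2 • d₂) =
        ∑ n ∈ Finset.Icc 3 4, ξ ^ n • e n := by
  refine ⟨fun n => if n = 3 then a₁ * b₂ + a₂ * b₁ - (c₁ * d₂ + c₂ * d₁) else a₂ * b₂ - c₂ * d₂,
    fun ξ => ?_⟩
  rw [quadratic_mul_quadratic, quadratic_mul_quadratic, h₁, h₂]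
  simp [show Finset.Icc 3 4 = {3, 4} from rfl]
  module

theorem exists_map_mul_map_sub_map_mul_map_eq_sum_Icc_three_four {R S T : Type*} [CommRing R]
    [Ring S] [Ring T] [Algebra R S] [Algebra R T] {φ ψ φ' ψ' : S →ₐ[R] T} {f₁ f₂ : S}
    (h₁ : φ f₁ + ψ f₁ = φ' f₁ + ψ' f₁)
    (h₂ : φ f₂ + ψ f₂ + φ f₁ * ψ f₁ = φ' f₂ + ψ' f₂ + φ' f₁ * ψ' f₁) :
    ∃ e : ℕ → T, ∀ ξ : R,
      φ (1 + ξ • f₁ + ξ ^ 2 • f₂) * ψ (1 + ξ • f₁ + ξ ^ 2 • f₂) -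
          φ' (1 + ξ • f₁ + ξ ^ 2 • f₂) * ψ' (1 + ξ • f₁ + ξ ^ 2 • f₂) =
        ∑ n ∈ Finset.Icc 3 4, ξ ^ n • e n := by
  simp only [map_add, map_one, map_smul]
  exact exists_quadratic_mul_sub_eq_sum_Icc_three_four h₁ h₂

namespace JordanianTwist

open Algebra.TensorProduct

variable {B : Type*} [Ring B] [Algebra ℚ B]

def secondOrder (h x : B) : B ⊗[ℚ] B := (1 / 2 : ℚ) • ((h * h) ⊗ₜ (x * x)) - h ⊗ₜ (x * x)

def comulTensorId (Δ : B →ₐ[ℚ] B ⊗[ℚ] B) : B ⊗[ℚ] B →ₐ[ℚ] (B ⊗[ℚ] B) ⊗[ℚ] B :=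
  map Δ (AlgHom.id ℚ B)

def idTensorComul (Δ : B →ₐ[ℚ] B ⊗[ℚ] B) : B ⊗[ℚ] B →ₐ[ℚ] (B ⊗[ℚ] B) ⊗[ℚ] B :=
  (Algebra.TensorProduct.assoc ℚ ℚ ℚ B B B).symm.toAlgHom.comp (map (AlgHom.id ℚ B) Δ)

variable {Δ : B →ₐ[ℚ] B ⊗[ℚ] B} {h x : B}

theorem cocycle_order_one (hΔh : Δ h = h ⊗ₜ 1 + 1 ⊗ₜ h) (hΔx : Δ x = x ⊗ₜ 1 + 1 ⊗ₜ x) :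
    includeLeft (S := ℚ) (h ⊗ₜ[ℚ] x) + comulTensorId Δ (h ⊗ₜ x) =
      map includeRight (AlgHom.id ℚ B) (h ⊗ₜ x) + idTensorComul Δ (h ⊗ₜ x) := by
  simp only [comulTensorId, idTensorComul, AlgHom.comp_apply, AlgEquiv.coe_toAlgHom,
    includeLeft_apply, map_tmul, AlgHom.id_apply, includeRight_apply, hΔh, hΔx,
    TensorProduct.add_tmul, TensorProduct.tmul_add, map_add, assoc_symm_tmul]
  abel

theorem cocycle_order_two_sub (hΔh : Δ h = h ⊗ₜ 1 + 1 ⊗ₜ h) (hΔx : Δ x = x ⊗ₜ 1 + 1 ⊗ₜ x) :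
    (includeLeft (S := ℚ) (secondOrder h x) + comulTensorId Δ (secondOrder h x) +
        includeLeft (S := ℚ) (h ⊗ₜ[ℚ] x) * comulTensorId Δ (h ⊗ₜ x)) -
      (map includeRight (AlgHom.id ℚ B) (secondOrder h x) + idTensorComul Δ (secondOrder h x) +
        map includeRight (AlgHom.id ℚ B) (h ⊗ₜ x) * idTensorComul Δ (h ⊗ₜ x)) =
      (h ⊗ₜ (x * h - h * x + (2 : ℚ) • x)) ⊗ₜ x := by
  simp only [secondOrder, comulTensorId, idTensorComul, AlgHom.comp_apply,
    AlgEquiv.coe_toAlgHom, map_sub, map_smul, includeLeft_apply, map_tmul,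
    AlgHom.id_apply, includeRight_apply, map_mul, hΔh, hΔx, add_mul, mul_add, tmul_mul_tmul,
    one_mul, mul_one, TensorProduct.add_tmul, TensorProduct.tmul_add, TensorProduct.sub_tmul,
    TensorProduct.tmul_sub, map_add, assoc_symm_tmul, TensorProduct.tmul_smul,
    ← TensorProduct.smul_tmul']
  module

theorem cocycle_order_two (hΔh : Δ h = h ⊗ₜ 1 + 1 ⊗ₜ h) (hΔx : Δ x = x ⊗ₜ 1 + 1 ⊗ₜ x)
    (hhx : h * x - x * h = (2 : ℚ) • x) :
    includeLeft (S := ℚ) (secondOrder h x) + comulTensorId Δ (secondOrder h x) +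
        includeLeft (S := ℚ) (h ⊗ₜ[ℚ] x) * comulTensorId Δ (h ⊗ₜ x) =
      map includeRight (AlgHom.id ℚ B) (secondOrder h x) + idTensorComul Δ (secondOrder h x) +
        map includeRight (AlgHom.id ℚ B) (h ⊗ₜ x) * idTensorComul Δ (h ⊗ₜ x) := by
  rw [← sub_eq_zero, cocycle_order_two_sub hΔh hΔx, ← hhx]
  simp

end JordanianTwist

theorem hgen_mul_xgen_sub_xgen_mul_hgen : hgen * xgen - xgen * hgen = (2 : ℚ) • xgen := by
  have hx : ⁅(Matrix.single 0 0 1 - Matrix.single 1 1 1 : gl2), (Matrix.single 0 1 1 : gl2)⁆ =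
      (2 : ℚ) • Matrix.single 0 1 1 := by
    simp [Ring.lie_def, sub_mul, mul_sub, Matrix.single_mul_single_same,
      Matrix.single_mul_single_of_ne, two_smul]
  have hι := (UniversalEnvelopingAlgebra.ι ℚ (L := gl2)).map_lie
    (Matrix.single 0 0 1 - Matrix.single 1 1 1 : gl2) (Matrix.single 0 1 1)
  rw [hx, map_smul, Ring.lie_def] at hι
  exact hι.symm

open JordanianTwist in
theorem jordanian_twist_cocycle_mod_xi_cubed
    (Δ : A →ₐ[ℚ] A ⊗[ℚ] A)
    -- Δ is the standard cocommutative coproduct on generators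
    (hΔ : ∀ a : gl2, Δ (ι a) = ι a ⊗ₜ[ℚ] 1 + 1 ⊗ₜ[ℚ] ι a) :
    ∃ c : ℕ → (A ⊗[ℚ] A) ⊗[ℚ] A, ∀ ξ : ℚ,
      q12 (F ξ) * (Algebra.TensorProduct.map Δ (AlgHom.id ℚ A)) (F ξ) -
      q23 (F ξ) * (Algebra.TensorProduct.assoc ℚ ℚ ℚ A A A).symm
          ((Algebra.TensorProduct.map (AlgHom.id ℚ A) Δ) (F ξ)) =
      ∑ n ∈ Finset.Icc 3 4, ξ ^ n • c n := by
  have hΔh : Δ hgen = hgen ⊗ₜ 1 + 1 ⊗ₜ hgen := hΔ _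
  have hΔx : Δ xgen = xgen ⊗ₜ 1 + 1 ⊗ₜ xgen := hΔ _
  exact exists_map_mul_map_sub_map_mul_map_eq_sum_Icc_three_four (cocycle_order_one hΔh hΔx)
    (cocycle_order_two hΔh hΔx hgen_mul_xgen_sub_xgen_mul_hgen)
end
end
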